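/- arXiv:2207.10164 — 3 statements merged into one kernel-verified Lean document; each statement's English description precedes it below -/
import Mathlib

section
/- Let m ≥ 1 and let G_m be the set of m-tuples (W_1,…,W_m) of subsets of {1,…,m} such that for every j either W_j = ∅ or W_j ∈ 𝒮_j, the sets W_1,…,W_m are pairwise disjoint, and W_1 ∪ ⋯ ∪ W_m = {1,…,m}. Then the map sending (W_1,…,W_m) to the family { W_j : j ∈ {1,…,m}, W_j ≠ ∅ } of its non-empty entries is a bijection from G_m onto the set of partitions of {1,…,m} (families of pairwise disjoint non-empty subsets whose union is {1,…,m}). Consequently, each global hypothesis in the PMBM update corresponds to a unique partition of the measurement set, and the number of global hypotheses equals the number of set partitions of an m-element set (the m-th Bell number). -/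
def S : ℕ → Finset (Finset ℕ)
  | 0 => ∅
  | (i + 1) =>
      insert {i + 1}
        (((Finset.range (i + 1)).attach.biUnion fun j =>
            have : j.1 < i + 1 := Finset.mem_range.mp j.2
            S j.1).image fun W => insert (i + 1) W)

def GlobalHyp (m : ℕ) : Set (Fin m → Finset ℕ) :=
  {W | (∀ j : Fin m, W j = ∅ ∨ W j ∈ S (j.1 + 1)) ∧
    (∀ i j : Fin m, i ≠ j → Disjoint (W i) (W j)) ∧
    Finset.univ.biUnion W = Finset.Icc 1 m}

def IsPartition (m : ℕ) (F : Finset (Finset ℕ)) : Prop :=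
  (∀ A ∈ F, A ≠ ∅) ∧ (∀ A ∈ F, ∀ B ∈ F, A ≠ B → Disjoint A B) ∧
    F.biUnion id = Finset.Icc 1 m

lemma mem_S_iff : ∀ (i : ℕ) (A : Finset ℕ), A ∈ S i ↔ i ∈ A ∧ A ⊆ Finset.Icc 1 i := by
  intro i
  induction i using Nat.strong_induction_on with
  | _ i ih =>
    intro A
    match i with
    | 0 =>
      simp only [S, Finset.notMem_empty, false_iff, not_and]
      intro h0 hs
      simpa using hs h0
    | (i+1) =>
      constructor
      · intro hA
        simp only [S, Finset.mem_insert, Finset.mem_image, Finset.mem_biUnion,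
          Finset.mem_attach, true_and, Subtype.exists] at hA
        rcases hA with rfl | ⟨B, ⟨j, hj, hB⟩, rfl⟩
        · refine ⟨Finset.mem_singleton_self _, ?_⟩
          intro x hx
          simp only [Finset.mem_singleton] at hx
          subst hx
          simp [Finset.mem_Icc]
        · have hj' : j < i + 1 := Finset.mem_range.mp hj
          have hBc := (ih j hj' B).mp hB
          refine ⟨Finset.mem_insert_self _ _, ?_⟩
          intro x hx
          rcases Finset.mem_insert.mp hx with rfl | hx
          · simp [Finset.mem_Icc]
          · have := hBc.2 hx
            simp only [Finset.mem_Icc] at this ⊢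
            omega
      · rintro ⟨hmem, hsub⟩
        by_cases hE : A.erase (i+1) = ∅
        · have hA1 : A = {i+1} := by
            apply Finset.Subset.antisymm
            · intro x hx
              by_contra hx1
              have : x ∈ A.erase (i+1) := Finset.mem_erase.mpr ⟨by simpa using hx1, hx⟩
              simp [hE] at this
            · intro x hx
              simp only [Finset.mem_singleton] at hx
              subst hx; exact hmem
          subst hA1
          simp [S]
        · set B := A.erase (i+1) with hB
          have hBne : B.Nonempty := Finset.nonempty_iff_ne_empty.mpr hE
          set k := B.max' hBne with hk
          have hkB : k ∈ B := B.max'_mem hBne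
          have hkA : k ∈ A := Finset.mem_of_mem_erase hkB
          have hki : k ≤ i := by
            have h1 := hsub hkA
            have hne2 : k ≠ i + 1 := Finset.ne_of_mem_erase hkB
            simp only [Finset.mem_Icc] at h1; omega
          have hBsub : B ⊆ Finset.Icc 1 k := by
            intro x hx
            have hx' := hsub (Finset.mem_of_mem_erase hx)
            simp only [Finset.mem_Icc] at hx' ⊢
            exact ⟨hx'.1, B.le_max' x hx⟩
          have hBk : B ∈ S k := (ih k (by omega) B).mpr ⟨hkB, hBsub⟩
          have hAi : A = insert (i+1) B := by
            rw [hB, Finset.insert_erase hmem]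
          rw [hAi]
          simp only [S, Finset.mem_insert, Finset.mem_image, Finset.mem_biUnion,
            Finset.mem_attach, true_and, Subtype.exists]
          right
          exact ⟨B, ⟨k, Finset.mem_range.mpr (by omega), hBk⟩, rfl⟩

lemma mem_fmap {m : ℕ} {W : Fin m → Finset ℕ} {A : Finset ℕ} :
    A ∈ (Finset.univ.image W).filter (fun A => A ≠ ∅) ↔ (∃ j, W j = A) ∧ A ≠ ∅ := by
  simp [Finset.mem_filter, Finset.mem_image]

/-- key injectivity lemma -/
lemma key_inj {m : ℕ} {W W' : Fin m → Finset ℕ} (hW : W ∈ GlobalHyp m)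
    (hW' : W' ∈ GlobalHyp m)
    (hF : (Finset.univ.image W).filter (fun A => A ≠ ∅)
        = (Finset.univ.image W').filter (fun A => A ≠ ∅))
    (j : Fin m) (hne : W' j ≠ ∅) : W j = W' j := by
  obtain ⟨h1, h2, h3⟩ := hW
  obtain ⟨h1', h2', h3'⟩ := hW'
  have hS' : W' j ∈ S (j.1 + 1) := (h1' j).resolve_left hne
  obtain ⟨hmem', hsub'⟩ := (mem_S_iff _ _).mp hS'
  have hjm : j.1 + 1 ∈ Finset.Icc 1 m := by
    simp only [Finset.mem_Icc]; exact ⟨Nat.succ_le_succ (Nat.zero_le _), j.2⟩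
  rw [← h3] at hjm
  obtain ⟨i, _, hji⟩ := Finset.mem_biUnion.mp hjm
  have hine : W i ≠ ∅ := Finset.ne_empty_of_mem hji
  have hiF : W i ∈ (Finset.univ.image W').filter (fun A => A ≠ ∅) := by
    rw [← hF]; exact mem_fmap.mpr ⟨⟨i, rfl⟩, hine⟩
  obtain ⟨⟨l, hl⟩, _⟩ := mem_fmap.mp hiF
  have hlj : l = j := by
    by_contra hlj
    exact Finset.disjoint_left.mp (h2' l j hlj) (hl ▸ hji) hmem'
  rw [hlj] at hl
  -- now W' j = W i
  have hS : W i ∈ S (i.1 + 1) := (h1 i).resolve_left hine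
  obtain ⟨hmemi, hsubi⟩ := (mem_S_iff _ _).mp hS
  have hij : i = j := by
    have e1 : i.1 + 1 ≤ j.1 + 1 := by
      have := hsub' (hl ▸ hmemi)
      simp only [Finset.mem_Icc] at this; omega
    have e2 : j.1 + 1 ≤ i.1 + 1 := by
      have := hsubi hji
      simp only [Finset.mem_Icc] at this; omega
    exact Fin.ext (by omega)
  subst hij
  exact hl.symm

/-- The map sending a global hypothesis `(W_1,…,W_m)` to the family of its non-empty
entries is a bijection from `G_m` onto the set of partitions of `{1,…,m}`; consequently
the number of global hypotheses equals the number of set partitions of an `m`-element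
set (the `m`-th Bell number). -/
theorem globalHyp_bijOn_partitions (m : ℕ) (hm : 1 ≤ m) :
    Set.BijOn (fun W : Fin m → Finset ℕ => (Finset.univ.image W).filter (fun A => A ≠ ∅))
      (GlobalHyp m) {F | IsPartition m F} ∧
    (GlobalHyp m).ncard = {F | IsPartition m F}.ncard := by
  classical
  have hbij : Set.BijOn
      (fun W : Fin m → Finset ℕ => (Finset.univ.image W).filter (fun A => A ≠ ∅))
      (GlobalHyp m) {F | IsPartition m F} := by
    refine ⟨?maps, ?inj, ?surj⟩
    case maps =>
      rintro W ⟨h1, h2, h3⟩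
      refine ⟨?_, ?_, ?_⟩
      · intro A hA
        exact (mem_fmap.mp hA).2
      · intro A hA B hB hAB
        obtain ⟨⟨i, hi⟩, _⟩ := mem_fmap.mp hA
        obtain ⟨⟨j, hj⟩, _⟩ := mem_fmap.mp hB
        have hij : i ≠ j := by rintro rfl; exact hAB (hi ▸ hj ▸ rfl)
        exact hi ▸ hj ▸ h2 i j hij
      · rw [← h3]
        ext x
        constructor
        · intro h
          obtain ⟨A, hA, hx⟩ := Finset.mem_biUnion.mp h
          obtain ⟨⟨j, hj⟩, _⟩ := mem_fmap.mp hA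
          exact Finset.mem_biUnion.mpr ⟨j, Finset.mem_univ j, hj ▸ hx⟩
        · intro h
          obtain ⟨j, _, hx⟩ := Finset.mem_biUnion.mp h
          exact Finset.mem_biUnion.mpr
            ⟨W j, mem_fmap.mpr ⟨⟨j, rfl⟩, Finset.ne_empty_of_mem hx⟩, hx⟩
    case inj =>
      intro W hW W' hW' hEq
      funext j
      by_cases h' : W' j = ∅
      · by_cases h : W j = ∅
        · rw [h, h']
        · exact key_inj hW' hW hEq.symm j h ▸ rfl
      · exact key_inj hW hW' hEq j h'
    case surj =>
      rintro F ⟨hne, hdisj, hun⟩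
      have hblock : ∀ A ∈ F, A ⊆ Finset.Icc 1 m := by
        intro A hA x hx
        rw [← hun]
        exact Finset.mem_biUnion.mpr ⟨A, hA, hx⟩
      set P : Fin m → Finset ℕ → Prop :=
        fun j A => A ∈ F ∧ (j.1 + 1) ∈ A ∧ A ⊆ Finset.Icc 1 (j.1 + 1) with hP
      have uniq : ∀ (j : Fin m) (A B : Finset ℕ), P j A → P j B → A = B := by
        rintro j A B ⟨hA, hAm, _⟩ ⟨hB, hBm, _⟩
        by_contra hAB
        exact Finset.disjoint_left.mp (hdisj A hA B hB hAB) hAm hBm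
      set W : Fin m → Finset ℕ :=
        fun j => if h : ∃ A, P j A then h.choose else ∅ with hWdef
      have hWspec : ∀ j : Fin m, W j ≠ ∅ → P j (W j) := by
        intro j hj
        by_cases h : ∃ A, P j A
        · have : W j = h.choose := by rw [hWdef]; exact dif_pos h
          rw [this]; exact h.choose_spec
        · exact absurd (by rw [hWdef]; exact dif_neg h) hj
      have hWex : ∀ (j : Fin m) (A : Finset ℕ), P j A → W j = A := by
        intro j A hA
        have h : ∃ B, P j B := ⟨A, hA⟩
        have h1 : W j = h.choose := by rw [hWdef]; exact dif_pos h
        exact h1 ▸ uniq j h.choose A h.choose_spec hA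
      have hcover : ∀ A ∈ F, ∃ j : Fin m, W j = A := by
        intro A hA
        have hAne : A.Nonempty := Finset.nonempty_iff_ne_empty.mpr (hne A hA)
        set k := A.max' hAne with hk
        have hkA : k ∈ A := A.max'_mem hAne
        have hkm : k ∈ Finset.Icc 1 m := hblock A hA hkA
        simp only [Finset.mem_Icc] at hkm
        refine ⟨⟨k - 1, by omega⟩, hWex _ A ⟨hA, ?_, ?_⟩⟩
        · show k - 1 + 1 ∈ A
          have : k - 1 + 1 = k := by omega
          rw [this]; exact hkA
        · intro x hx
          have h1 := hblock A hA hx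
          simp only [Finset.mem_Icc] at h1 ⊢
          have := A.le_max' x hx
          omega
      refine ⟨W, ⟨?_, ?_, ?_⟩, ?_⟩
      · intro j
        by_cases h : W j = ∅
        · exact Or.inl h
        · obtain ⟨_, hm1, hm2⟩ := hWspec j h
          exact Or.inr ((mem_S_iff _ _).mpr ⟨hm1, hm2⟩)
      · intro i j hij
        by_cases hi : W i = ∅
        · rw [hi]; exact Finset.disjoint_empty_left _
        by_cases hj : W j = ∅
        · rw [hj]; exact Finset.disjoint_empty_right _
        obtain ⟨hiF, him, his⟩ := hWspec i hi
        obtain ⟨hjF, hjm, hjs⟩ := hWspec j hj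
        have : W i ≠ W j := by
          intro hE
          apply hij
          have e1 := hjs (hE ▸ him)
          have e2 := his (hE.symm ▸ hjm)
          simp only [Finset.mem_Icc] at e1 e2
          exact Fin.ext (by omega)
        exact hdisj _ hiF _ hjF this
      · rw [← hun]
        ext x
        constructor
        · intro h
          obtain ⟨j, _, hx⟩ := Finset.mem_biUnion.mp h
          obtain ⟨hjF, _, _⟩ := hWspec j (Finset.ne_empty_of_mem hx)
          exact Finset.mem_biUnion.mpr ⟨W j, hjF, hx⟩
        · intro h
          obtain ⟨A, hA, hx⟩ := Finset.mem_biUnion.mp h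
          obtain ⟨j, hj⟩ := hcover A hA
          exact Finset.mem_biUnion.mpr ⟨j, Finset.mem_univ j, hj ▸ (hx : x ∈ A)⟩
      · ext A
        rw [mem_fmap]
        constructor
        · rintro ⟨⟨j, rfl⟩, hne'⟩
          exact (hWspec j hne').1
        · intro hA
          obtain ⟨j, hj⟩ := hcover A hA
          exact ⟨⟨j, hj⟩, hne A hA⟩
  exact ⟨hbij, by rw [← hbij.image_eq, Set.ncard_image_of_injOn hbij.injOn]⟩
end

section
/- Let λ^B > 0, γ > 0 and p^S ∈ [0,1] be real numbers and write q = p^S e^{-γ}. Then for every natural number k, λ^B/(1 - e^{-γ}) - λ^B (1 - q^k)/(1 - q) ≥ λ^B (1 - p^S) e^{-γ} / ((1 - e^{-γ})(1 - p^S e^{-γ})); that is, this quantity is a lower bound on the bias of the SPA filter's constant value relative to the Bayesian predicted expected number of undetected objects at every time step. -/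
/-!
The Bayesian value `λ^B (1 - q^k)/(1 - q)` increases in `k` towards `λ^B/(1 - q)`, so the bias
is smallest in the limit, where it equals the bound because
`1/(1 - e^{-γ}) - 1/(1 - p^S e^{-γ}) = (1 - p^S) e^{-γ}/((1 - e^{-γ})(1 - p^S e^{-γ}))`.
-/

theorem mul_one_sub_pow_div_one_sub_le {K : Type*} [Field K] [LinearOrder K]
    [IsStrictOrderedRing K] {c q : K} (hc : 0 ≤ c) (hq0 : 0 ≤ q) (hq1 : q ≤ 1)
    (k : ℕ) : c * (1 - q ^ k) / (1 - q) ≤ c / (1 - q) :=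
  div_le_div_of_nonneg_right (mul_le_of_le_one_right hc (sub_le_self _ (pow_nonneg hq0 k)))
    (sub_nonneg.mpr hq1)

theorem div_one_sub_sub_div_one_sub_mul {K : Type*} [Field K] (c a p : K) (ha : a ≠ 1)
    (hpa : p * a ≠ 1) :
    c / (1 - a) - c / (1 - p * a) = c * (1 - p) * a / ((1 - a) * (1 - p * a)) := by
  rw [div_sub_div _ _ (sub_ne_zero.mpr ha.symm) (sub_ne_zero.mpr hpa.symm)]
  ring

/-- With `q = p^S e^{-γ}`, for every time step `k` the bias of the SPA filter's constant
value relative to the Bayesian predicted expected number of undetected objects is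
bounded below by `λ^B (1 - p^S) e^{-γ} / ((1 - e^{-γ})(1 - p^S e^{-γ}))`. -/
theorem spa_bias_lower_bound (lamB γ pS : ℝ) (hlam : 0 < lamB) (hγ : 0 < γ)
    (hpS0 : 0 ≤ pS) (hpS1 : pS ≤ 1) (q : ℝ) (hq : q = pS * Real.exp (-γ)) (k : ℕ) :
    lamB / (1 - Real.exp (-γ)) - lamB * (1 - q ^ k) / (1 - q) ≥
      lamB * (1 - pS) * Real.exp (-γ) /
        ((1 - Real.exp (-γ)) * (1 - pS * Real.exp (-γ))) := by
  subst hq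
  have he1 : Real.exp (-γ) < 1 := Real.exp_lt_one_iff.mpr (neg_neg_of_pos hγ)
  have hq0 : 0 ≤ pS * Real.exp (-γ) := mul_nonneg hpS0 (Real.exp_pos _).le
  have hq1 : pS * Real.exp (-γ) < 1 :=
    (mul_le_of_le_one_left (Real.exp_pos _).le hpS1).trans_lt he1
  rw [ge_iff_le, ← div_one_sub_sub_div_one_sub_mul lamB _ pS he1.ne hq1.ne]
  exact sub_le_sub_left (mul_one_sub_pow_div_one_sub_le hlam.le hq0 hq1.le k) _
end

section
/- Let λ^B > 0, γ > 0 and p^S ∈ [0,1] be real numbers and write q = p^S e^{-γ}. Then, as k → ∞, the difference λ^B/(1 - e^{-γ}) - λ^B (1 - q^k)/(1 - q) converges to λ^B (1 - p^S) e^{-γ} / ((1 - e^{-γ})(1 - p^S e^{-γ})). -/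
/-- With `q = p^S e^{-γ}`, as `k → ∞` the difference between the SPA filter's constant
value and the Bayesian predicted expected number of undetected objects converges to
`λ^B (1 - p^S) e^{-γ} / ((1 - e^{-γ})(1 - p^S e^{-γ}))`. -/
theorem spa_bias_limit (lamB γ pS : ℝ) (hlam : 0 < lamB) (hγ : 0 < γ)
    (hpS0 : 0 ≤ pS) (hpS1 : pS ≤ 1) (q : ℝ) (hq : q = pS * Real.exp (-γ)) :
    Filter.Tendsto
      (fun k : ℕ => lamB / (1 - Real.exp (-γ)) - lamB * (1 - q ^ k) / (1 - q))
      Filter.atTop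
      (nhds (lamB * (1 - pS) * Real.exp (-γ) /
        ((1 - Real.exp (-γ)) * (1 - pS * Real.exp (-γ))))) := by
  have he1 : Real.exp (-γ) < 1 := Real.exp_lt_one_iff.mpr (by linarith)
  have he0 : 0 < Real.exp (-γ) := Real.exp_pos _
  have hq1 : q < 1 := by
    rw [hq]
    calc pS * Real.exp (-γ) ≤ 1 * Real.exp (-γ) := by nlinarith
    _ < 1 := by linarith
  have hq0 : 0 ≤ q := by rw [hq]; positivity
  have h1 : Filter.Tendsto (fun k : ℕ => q ^ k) Filter.atTop (nhds 0) :=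
    tendsto_pow_atTop_nhds_zero_of_lt_one hq0 hq1
  have h2 : Filter.Tendsto
      (fun k : ℕ => lamB / (1 - Real.exp (-γ)) - lamB * (1 - q ^ k) / (1 - q))
      Filter.atTop (nhds (lamB / (1 - Real.exp (-γ)) - lamB * (1 - 0) / (1 - q))) := by
    apply Filter.Tendsto.const_sub
    exact ((h1.const_sub 1).const_mul lamB).div_const _
  convert h2 using 2
  rw [hq]
  have hne1 : (1 : ℝ) - Real.exp (-γ) ≠ 0 := by linarith
  have hne2 : (1 : ℝ) - pS * Real.exp (-γ) ≠ 0 := by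
    rw [hq] at hq1; linarith
  field_simp
  ring
end
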